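/- arXiv:1705.07360 — 3 statements merged into one kernel-verified Lean document; each statement's English description precedes it below -/
import Mathlib

section
/- Let M be an N×N real matrix and g₁, g₂, f₁, f₂ ∈ ℝ^N with g₁ and g₂ linearly dependent. Then the ρ₁ρ₂ coefficient in the expansion det(M + ρ₁ f₁g₁ᵀ + ρ₂ f₂g₂ᵀ - λI) = D(λ) + ρ₁P₁(λ) + ρ₂P₂(λ) + ρ₁ρ₂Q(λ) vanishes identically: Q(λ) = 0 for all λ. -/
open Matrix Polynomial

noncomputable def rtpQaux {n : ℕ} (A : Matrix (Fin n) (Fin n) ℝ) : ℝ[X] :=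
  det (A.map C - (X : ℝ[X]) • 1)

lemma rtpQaux_eval {n : ℕ} (A : Matrix (Fin n) (Fin n) ℝ) (μ : ℝ) :
    (rtpQaux A).eval μ = det (A - μ • 1) := by
  have h := (evalRingHom μ).map_det (A.map C - (X : ℝ[X]) • 1)
  rw [rtpQaux, ← coe_evalRingHom, h]
  congr 1
  ext i j
  simp [Matrix.map_apply, Matrix.sub_apply, Matrix.smul_apply, Matrix.one_apply]
  split <;> simp

lemma rtpQaux_ne_zero {n : ℕ} (A : Matrix (Fin n) (Fin n) ℝ) : rtpQaux A ≠ 0 := by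
  have h : rtpQaux A = (-1) ^ n * A.charpoly := by
    rw [rtpQaux, Matrix.charpoly, show ((-1)^n : ℝ[X]) = (-1)^(Fintype.card (Fin n)) by simp,
      ← Matrix.det_neg]
    congr 1
    rw [charmatrix]
    ext i j
    simp [Matrix.map_apply, Matrix.sub_apply, Matrix.smul_apply, Matrix.one_apply,
      Matrix.scalar_apply, Matrix.diagonal_apply]
  rw [h]
  intro hc
  have := A.charpoly_monic.ne_zero
  rcases mul_eq_zero.mp hc with h' | h'
  · exact (pow_ne_zero n (by norm_num : (-1 : ℝ[X]) ≠ 0)) h'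
  · exact this h'

/-- If `g₁` and `g₂` are linearly dependent, then the `ρ₁ρ₂` coefficient `Q(λ)` in the
expansion `det(M + ρ₁f₁g₁ᵀ + ρ₂f₂g₂ᵀ - λI) = D(λ) + ρ₁P₁(λ) + ρ₂P₂(λ) + ρ₁ρ₂Q(λ)`
vanishes identically. -/
theorem rank_two_perturbation_Q_vanishes_of_dependent
    (N : ℕ) (M : Matrix (Fin N) (Fin N) ℝ) (f₁ g₁ f₂ g₂ : Fin N → ℝ)
    (hdep : ¬ LinearIndependent ℝ ![g₁, g₂])
    (D P₁ P₂ Q : ℝ → ℝ)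
    (hexp : ∀ (lam ρ₁ ρ₂ : ℝ),
      det (M + ρ₁ • vecMulVec f₁ g₁ + ρ₂ • vecMulVec f₂ g₂
          - lam • (1 : Matrix (Fin N) (Fin N) ℝ)) =
        D lam + ρ₁ * P₁ lam + ρ₂ * P₂ lam + ρ₁ * ρ₂ * Q lam) :
    ∀ lam : ℝ, Q lam = 0 := by
  have hcases : g₂ = 0 ∨ ∃ a : ℝ, a • g₂ = g₁ := by
    by_contra h
    push_neg at h
    refine hdep (linearIndependent_fin2.mpr ⟨?_, ?_⟩)
    · simpa using h.1
    · intro a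
      simpa using h.2 a
  intro lam
  rcases hcases with h0 | ⟨a, ha⟩
  · -- g₂ = 0
    have hz : vecMulVec f₂ g₂ = 0 := by
      ext i j; simp [vecMulVec_apply, h0]
    have h00 := hexp lam 0 0
    have h10 := hexp lam 1 0
    have h01 := hexp lam 0 1
    have h11 := hexp lam 1 1
    rw [hz] at h00 h10 h01 h11
    simp only [smul_zero, add_zero, zero_smul, one_smul, zero_mul, one_mul, mul_zero,
      mul_one] at h00 h10 h01 h11
    linarith
  · -- g₁ = a • g₂
    have hVsum : ∀ ρ₁ ρ₂ : ℝ,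
        ρ₁ • vecMulVec f₁ g₁ + ρ₂ • vecMulVec f₂ g₂
          = vecMulVec ((ρ₁ * a) • f₁ + ρ₂ • f₂) g₂ := by
      intro ρ₁ ρ₂
      ext i j
      simp [vecMulVec_apply, ← ha, Matrix.add_apply, Matrix.smul_apply, Pi.add_apply,
        Pi.smul_apply, smul_eq_mul]
      ring
    set A : ℝ → ℝ → Matrix (Fin N) (Fin N) ℝ :=
      fun ρ₁ ρ₂ => M + ρ₁ • vecMulVec f₁ g₁ + ρ₂ • vecMulVec f₂ g₂ with hA
    set r : ℝ[X] :=
      rtpQaux (A 1 1) - rtpQaux (A 1 0) - rtpQaux (A 0 1) + rtpQaux (A 0 0) with hr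
    have hroot : ∀ μ : ℝ, ¬ (rtpQaux M).IsRoot μ → r.IsRoot μ := by
      intro μ hμ
      have hdet : IsUnit (det (M - μ • (1 : Matrix (Fin N) (Fin N) ℝ))) := by
        rw [isUnit_iff_ne_zero, ← rtpQaux_eval]
        exact hμ
      have key : ∀ ρ₁ ρ₂ : ℝ,
          det (A ρ₁ ρ₂ - μ • (1 : Matrix (Fin N) (Fin N) ℝ))
            = det (M - μ • (1 : Matrix (Fin N) (Fin N) ℝ)) *
              (1 + ((ρ₁ * a) * (g₂ ⬝ᵥ (M - μ • (1 : Matrix (Fin N) (Fin N) ℝ))⁻¹ *ᵥ f₁)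
                + ρ₂ * (g₂ ⬝ᵥ (M - μ • (1 : Matrix (Fin N) (Fin N) ℝ))⁻¹ *ᵥ f₂))) := by
        intro ρ₁ ρ₂
        have hm : A ρ₁ ρ₂ - μ • (1 : Matrix (Fin N) (Fin N) ℝ)
            = (M - μ • (1 : Matrix (Fin N) (Fin N) ℝ))
              + replicateCol Unit ((ρ₁ * a) • f₁ + ρ₂ • f₂) * replicateRow Unit g₂ := by
          rw [← vecMulVec_eq Unit, ← hVsum, hA]
          beta_reduce
          abel
        rw [hm, det_add_replicateCol_mul_replicateRow hdet]
        congr 1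
        rw [det_unique, Matrix.add_apply, Matrix.one_apply_eq,
          Matrix.mul_assoc, ← replicateCol_mulVec, replicateRow_mul_replicateCol_apply, mulVec_add, mulVec_smul,
          dotProduct_add, dotProduct_smul, smul_eq_mul]
        simp only [mulVec_smul, dotProduct_smul, smul_eq_mul]
      simp only [IsRoot, hr, eval_add, eval_sub, rtpQaux_eval, key]
      ring
    have hinf : {x : ℝ | r.IsRoot x}.Infinite := by
      have hfin : {x : ℝ | (rtpQaux M).IsRoot x}.Finite :=
        Polynomial.finite_setOf_isRoot (rtpQaux_ne_zero M)
      exact Set.Infinite.mono (fun x hx => hroot x hx) hfin.infinite_compl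
    have hr0 : r = 0 := Polynomial.eq_zero_of_infinite_isRoot r hinf
    have he : r.eval lam = 0 := by rw [hr0, eval_zero]
    rw [hr, eval_add, eval_sub, eval_sub, rtpQaux_eval, rtpQaux_eval, rtpQaux_eval,
      rtpQaux_eval] at he
    have h00 := hexp lam 0 0
    have h10 := hexp lam 1 0
    have h01 := hexp lam 0 1
    have h11 := hexp lam 1 1
    rw [hA] at he
    simp only at he
    linarith [he, h00, h10, h01, h11]
end

section
/- (Aronszajn–Krein eigenvalue condition, rank two) Let M be an N×N real matrix, f₁,g₁,f₂,g₂ ∈ ℝ^N, ρ₁,ρ₂ ∈ ℝ, and λ ∈ ℝ with M - λI invertible. Write R = (M - λI)⁻¹. Then λ is an eigenvalue of M + ρ₁f₁g₁ᵀ + ρ₂f₂g₂ᵀ if and only if 0 = 1 + ρ₁ g₁ᵀRf₁ + ρ₂ g₂ᵀRf₂ + ρ₁ρ₂((g₁ᵀRf₁)(g₂ᵀRf₂) - (g₁ᵀRf₂)(g₂ᵀRf₁)). -/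
open Matrix

/-- Aronszajn–Krein eigenvalue condition for a rank-two perturbation. -/
theorem aronszajn_krein_rank_two
    (N : ℕ) (M : Matrix (Fin N) (Fin N) ℝ) (f₁ g₁ f₂ g₂ : Fin N → ℝ) (ρ₁ ρ₂ lam : ℝ)
    (hinv : IsUnit (M - lam • (1 : Matrix (Fin N) (Fin N) ℝ)).det)
    (R : Matrix (Fin N) (Fin N) ℝ)
    (hR : R = (M - lam • (1 : Matrix (Fin N) (Fin N) ℝ))⁻¹) :
    det (M + ρ₁ • vecMulVec f₁ g₁ + ρ₂ • vecMulVec f₂ g₂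
        - lam • (1 : Matrix (Fin N) (Fin N) ℝ)) = 0 ↔
      0 = 1 + ρ₁ * (g₁ ⬝ᵥ R.mulVec f₁) + ρ₂ * (g₂ ⬝ᵥ R.mulVec f₂)
        + ρ₁ * ρ₂ * ((g₁ ⬝ᵥ R.mulVec f₁) * (g₂ ⬝ᵥ R.mulVec f₂)
            - (g₁ ⬝ᵥ R.mulVec f₂) * (g₂ ⬝ᵥ R.mulVec f₁)) := by
  set A : Matrix (Fin N) (Fin N) ℝ := M - lam • (1 : Matrix (Fin N) (Fin N) ℝ) with hA
  set P : Matrix (Fin N) (Fin N) ℝ := ρ₁ • vecMulVec f₁ g₁ + ρ₂ • vecMulVec f₂ g₂ with hP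
  have hAR : A * R = 1 := by rw [hR]; exact mul_nonsing_inv A hinv
  have h1 : M + ρ₁ • vecMulVec f₁ g₁ + ρ₂ • vecMulVec f₂ g₂
      - lam • (1 : Matrix (Fin N) (Fin N) ℝ) = A * (1 + R * P) := by
    rw [Matrix.mul_add, ← Matrix.mul_assoc, hAR, Matrix.mul_one, Matrix.one_mul, hA, hP]
    abel
  -- rank-2 factorization
  set B : Matrix (Fin N) (Fin 2) ℝ :=
    Matrix.of (fun i j => if j = 0 then ρ₁ * R.mulVec f₁ i else ρ₂ * R.mulVec f₂ i) with hB
  set C : Matrix (Fin 2) (Fin N) ℝ :=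
    Matrix.of (fun j k => if j = 0 then g₁ k else g₂ k) with hC
  have hBC : R * P = B * C := by
    ext i k
    simp only [hP, hB, hC, mul_apply, Matrix.add_apply, Matrix.smul_apply, vecMulVec_apply,
      Fin.sum_univ_two, Matrix.of_apply, eq_self_iff_true, if_true, smul_eq_mul,
      if_neg (by decide : ¬((1 : Fin 2) = 0)), mulVec, dotProduct,
      Finset.mul_sum, Finset.sum_mul, mul_add, ← Finset.sum_add_distrib]
    exact Finset.sum_congr rfl fun j _ => by ring
  set D := C * B with hD
  have e00 : D 0 0 = ρ₁ * (g₁ ⬝ᵥ R.mulVec f₁) := by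
    simp only [hD, hB, hC, mul_apply, Matrix.of_apply, eq_self_iff_true, if_true, dotProduct, Finset.mul_sum]
    exact Finset.sum_congr rfl fun j _ => by ring
  have e01 : D 0 1 = ρ₂ * (g₁ ⬝ᵥ R.mulVec f₂) := by
    simp only [hD, hB, hC, mul_apply, Matrix.of_apply, eq_self_iff_true, if_true,
      if_neg (by decide : ¬((1 : Fin 2) = 0)), dotProduct, Finset.mul_sum]
    exact Finset.sum_congr rfl fun j _ => by ring
  have e10 : D 1 0 = ρ₁ * (g₂ ⬝ᵥ R.mulVec f₁) := by
    simp only [hD, hB, hC, mul_apply, Matrix.of_apply, eq_self_iff_true, if_true,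
      if_neg (by decide : ¬((1 : Fin 2) = 0)), dotProduct, Finset.mul_sum]
    exact Finset.sum_congr rfl fun j _ => by ring
  have e11 : D 1 1 = ρ₂ * (g₂ ⬝ᵥ R.mulVec f₂) := by
    simp only [hD, hB, hC, mul_apply, Matrix.of_apply, eq_self_iff_true, if_true,
      if_neg (by decide : ¬((1 : Fin 2) = 0)), dotProduct, Finset.mul_sum]
    exact Finset.sum_congr rfl fun j _ => by ring
  have hdet2 : det (1 + R * P) =
      1 + ρ₁ * (g₁ ⬝ᵥ R.mulVec f₁) + ρ₂ * (g₂ ⬝ᵥ R.mulVec f₂)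
        + ρ₁ * ρ₂ * ((g₁ ⬝ᵥ R.mulVec f₁) * (g₂ ⬝ᵥ R.mulVec f₂)
            - (g₁ ⬝ᵥ R.mulVec f₂) * (g₂ ⬝ᵥ R.mulVec f₁)) := by
    rw [hBC, Matrix.det_one_add_mul_comm]
    have : det (1 + D) = (1 + D 0 0) * (1 + D 1 1) - D 0 1 * D 1 0 := by
      rw [Matrix.det_fin_two]
      simp [Matrix.one_apply]
    rw [← hD, this, e00, e01, e10, e11]
    ring
  rw [h1, det_mul, hdet2, mul_eq_zero]
  have hd := hinv.ne_zero
  constructor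
  · rintro (h | h)
    · exact absurd h hd
    · exact h.symm
  · intro h; exact Or.inr h.symm
end

section
/- The 2×2 matrix H(k) = [[6(K-E)/K, 3(1+k²)(K-E)/(k²K)], [-6k², -3(1+k²)]], where K = K(k) and E = E(k) are complete elliptic integrals with modulus k ∈ (0,1), has eigenvalues λ₀ = 0 and λ₁ = ((3-3k²)K - 6E)/K; moreover λ₁ < 0. -/
open Real Matrix MeasureTheory Set

/-- The complete elliptic integral of the first kind. -/
noncomputable def ellipticK (k : ℝ) : ℝ :=
  ∫ x in (0:ℝ)..1, 1 / Real.sqrt ((1 - x ^ 2) * (1 - k ^ 2 * x ^ 2))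

/-- The complete elliptic integral of the second kind. -/
noncomputable def ellipticE (k : ℝ) : ℝ :=
  ∫ x in (0:ℝ)..1, Real.sqrt (1 - k ^ 2 * x ^ 2) / Real.sqrt (1 - x ^ 2)

section aux

variable {k : ℝ}

lemma domInt (hk1 : k < 1) :
    IntegrableOn (fun x : ℝ => (Real.sqrt (1 - k ^ 2))⁻¹ * (1 - x) ^ (-(1/2) : ℝ))
      (Ioc (0:ℝ) 1) volume := by
  have h1 : IntervalIntegrable (fun x : ℝ => x ^ (-(1/2) : ℝ)) volume 0 1 :=
    intervalIntegral.intervalIntegrable_rpow' (by norm_num)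
  have h2 := (h1.comp_sub_left 1).symm
  simp only [sub_zero, sub_self] at h2
  exact ((intervalIntegrable_iff_integrableOn_Ioc_of_le zero_le_one).1 h2).const_mul _

lemma basic_bounds (hk0 : 0 < k) (hk1 : k < 1) {x : ℝ} (hx0 : 0 < x) (hx1 : x < 1) :
    k ^ 2 * x ^ 2 < 1 ∧ x ^ 2 < 1 ∧
      (1 - x) * (1 - k ^ 2) ≤ (1 - x ^ 2) * (1 - k ^ 2 * x ^ 2) := by
  have hx2 : x ^ 2 < 1 := by nlinarith
  have hk2 : k ^ 2 < 1 := by nlinarith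
  have hkx : k ^ 2 * x ^ 2 < 1 := by nlinarith [sq_nonneg k, sq_nonneg x]
  refine ⟨hkx, hx2, ?_⟩
  have e1 : (1 - x) ≤ 1 - x ^ 2 := by nlinarith
  have e2 : 1 - k ^ 2 ≤ 1 - k ^ 2 * x ^ 2 := by
    nlinarith [mul_nonneg (sq_nonneg k) (by nlinarith : (0:ℝ) ≤ 1 - x ^ 2)]
  exact mul_le_mul e1 e2 (by nlinarith) (by nlinarith)

lemma K_bound (hk0 : 0 < k) (hk1 : k < 1) {x : ℝ} (hx : x ∈ Ioo (0:ℝ) 1) :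
    1 / Real.sqrt ((1 - x ^ 2) * (1 - k ^ 2 * x ^ 2)) ≤
      (Real.sqrt (1 - k ^ 2))⁻¹ * (1 - x) ^ (-(1/2) : ℝ) := by
  obtain ⟨hx0, hx1⟩ := hx
  obtain ⟨hkx, hx2, hlo⟩ := basic_bounds hk0 hk1 hx0 hx1
  have hk2 : k ^ 2 < 1 := by nlinarith
  have hpos : (0:ℝ) < (1 - x) * (1 - k ^ 2) := mul_pos (by linarith) (by nlinarith)
  have hsq : Real.sqrt ((1 - x) * (1 - k ^ 2)) ≤
      Real.sqrt ((1 - x ^ 2) * (1 - k ^ 2 * x ^ 2)) := Real.sqrt_le_sqrt hlo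
  have hsp : (0:ℝ) < Real.sqrt ((1 - x) * (1 - k ^ 2)) := Real.sqrt_pos.2 hpos
  have h := one_div_le_one_div_of_le hsp hsq
  refine h.trans (le_of_eq ?_)
  rw [Real.sqrt_mul (by linarith), Real.rpow_neg (by linarith),
    ← Real.sqrt_eq_rpow, one_div, mul_inv, mul_comm]

lemma E_bound (hk0 : 0 < k) (hk1 : k < 1) {x : ℝ} (hx : x ∈ Ioo (0:ℝ) 1) :
    Real.sqrt (1 - k ^ 2 * x ^ 2) / Real.sqrt (1 - x ^ 2) ≤
      (Real.sqrt (1 - k ^ 2))⁻¹ * (1 - x) ^ (-(1/2) : ℝ) := by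
  obtain ⟨hx0, hx1⟩ := hx
  obtain ⟨hkx, hx2, -⟩ := basic_bounds hk0 hk1 hx0 hx1
  have h1 : Real.sqrt (1 - k ^ 2 * x ^ 2) ≤ 1 := Real.sqrt_le_one.2 (by nlinarith [mul_nonneg (sq_nonneg k) (sq_nonneg x)])
  have hsp : (0:ℝ) < Real.sqrt (1 - x ^ 2) := Real.sqrt_pos.2 (by nlinarith)
  calc Real.sqrt (1 - k ^ 2 * x ^ 2) / Real.sqrt (1 - x ^ 2)
      ≤ 1 / Real.sqrt (1 - x ^ 2) := by gcongr
    _ ≤ 1 / Real.sqrt ((1 - x) * (1 - k ^ 2)) := by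
        gcongr
        · exact Real.sqrt_pos.2 (mul_pos (by linarith) (by nlinarith))
        · nlinarith [mul_pos hx0 (by linarith : (0:ℝ) < 1 - x),
            mul_nonneg (by linarith : (0:ℝ) ≤ 1 - x) (sq_nonneg k)]
    _ = (Real.sqrt (1 - k ^ 2))⁻¹ * (1 - x) ^ (-(1/2) : ℝ) := by
        rw [Real.sqrt_mul (by linarith), Real.rpow_neg (by linarith),
          ← Real.sqrt_eq_rpow, one_div, mul_inv, mul_comm]

end aux

/-- The 2×2 restriction of the linearized Rubinstein–Sternberg operator has
eigenvalues `0` and `λ₁ = ((3-3k²)K - 6E)/K`, and `λ₁ < 0`. -/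
theorem RS_two_by_two_eigenvalues (k : ℝ) (hk0 : 0 < k) (hk1 : k < 1) :
    det (!![6 * (ellipticK k - ellipticE k) / ellipticK k,
            3 * (1 + k ^ 2) * (ellipticK k - ellipticE k) / (k ^ 2 * ellipticK k);
            -6 * k ^ 2, -3 * (1 + k ^ 2)] : Matrix (Fin 2) (Fin 2) ℝ) = 0 ∧
    trace (!![6 * (ellipticK k - ellipticE k) / ellipticK k,
            3 * (1 + k ^ 2) * (ellipticK k - ellipticE k) / (k ^ 2 * ellipticK k);
            -6 * k ^ 2, -3 * (1 + k ^ 2)] : Matrix (Fin 2) (Fin 2) ℝ) =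
        ((3 - 3 * k ^ 2) * ellipticK k - 6 * ellipticE k) / ellipticK k ∧
    ((3 - 3 * k ^ 2) * ellipticK k - 6 * ellipticE k) / ellipticK k < 0 := by
  set fK : ℝ → ℝ := fun x => 1 / Real.sqrt ((1 - x ^ 2) * (1 - k ^ 2 * x ^ 2)) with hfK
  set fE : ℝ → ℝ := fun x => Real.sqrt (1 - k ^ 2 * x ^ 2) / Real.sqrt (1 - x ^ 2) with hfE
  set g : ℝ → ℝ := fun x => (Real.sqrt (1 - k ^ 2))⁻¹ * (1 - x) ^ (-(1/2) : ℝ) with hg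
  have hg1 : g 1 = 0 := by simp [hg, Real.zero_rpow (by norm_num : (-(1/2) : ℝ) ≠ 0)]
  -- measurability
  have hmK : AEStronglyMeasurable fK (volume.restrict (Ioc (0:ℝ) 1)) := by
    apply Measurable.aestronglyMeasurable
    exact measurable_const.div
      ((Real.continuous_sqrt.comp (by continuity)).measurable)
  have hmE : AEStronglyMeasurable fE (volume.restrict (Ioc (0:ℝ) 1)) := by
    apply Measurable.aestronglyMeasurable
    exact ((Real.continuous_sqrt.comp (by continuity)).measurable).div
      ((Real.continuous_sqrt.comp (by continuity)).measurable)
  -- integrability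
  have hKint : IntegrableOn fK (Ioc (0:ℝ) 1) volume := by
    refine (domInt hk1).mono' hmK ?_
    filter_upwards [ae_restrict_mem measurableSet_Ioc] with x hx
    rcases lt_or_eq_of_le hx.2 with h | h
    · rw [Real.norm_eq_abs, abs_of_nonneg (by positivity)]
      exact K_bound hk0 hk1 ⟨hx.1, h⟩
    · subst h; simp [hfK, hg1]
  have hEint : IntegrableOn fE (Ioc (0:ℝ) 1) volume := by
    refine (domInt hk1).mono' hmE ?_
    filter_upwards [ae_restrict_mem measurableSet_Ioc] with x hx
    rcases lt_or_eq_of_le hx.2 with h | h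
    · rw [Real.norm_eq_abs, abs_of_nonneg (by positivity)]
      exact E_bound hk0 hk1 ⟨hx.1, h⟩
    · subst h; simp [hfE, hg1]
  -- representation over Ioo
  have hKrep : ellipticK k = ∫ x in Ioo (0:ℝ) 1, fK x := by
    rw [ellipticK, intervalIntegral.integral_of_le zero_le_one,
      integral_Ioc_eq_integral_Ioo]
  have hErep : ellipticE k = ∫ x in Ioo (0:ℝ) 1, fE x := by
    rw [ellipticE, intervalIntegral.integral_of_le zero_le_one,
      integral_Ioc_eq_integral_Ioo]
  have hKint' := hKint.mono_set Ioo_subset_Ioc_self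
  have hEint' := hEint.mono_set Ioo_subset_Ioc_self
  -- K ≥ 1
  have hK1 : (1:ℝ) ≤ ellipticK k := by
    have hconst : IntegrableOn (fun _ : ℝ => (1:ℝ)) (Ioo (0:ℝ) 1) volume :=
      integrableOn_const (by simp [Real.volume_Ioo])
    have hmono : ∀ x ∈ Ioo (0:ℝ) 1, (1:ℝ) ≤ fK x := by
      intro x hx
      obtain ⟨hkx, hx2, -⟩ := basic_bounds hk0 hk1 hx.1 hx.2
      have hb : (0:ℝ) < (1 - x ^ 2) * (1 - k ^ 2 * x ^ 2) := by nlinarith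
      have hle : (1 - x ^ 2) * (1 - k ^ 2 * x ^ 2) ≤ 1 := by
        nlinarith [sq_nonneg x, mul_nonneg (sq_nonneg k) (sq_nonneg x)]
      have hs : (0:ℝ) < Real.sqrt ((1 - x ^ 2) * (1 - k ^ 2 * x ^ 2)) :=
        Real.sqrt_pos.2 hb
      rw [hfK]
      rw [le_div_iff₀ hs, one_mul]
      exact Real.sqrt_le_one.2 hle
    calc (1:ℝ) = ∫ _x in Ioo (0:ℝ) 1, (1:ℝ) := by simp [Real.volume_Ioo]
      _ ≤ ∫ x in Ioo (0:ℝ) 1, fK x :=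
          setIntegral_mono_on hconst hKint' measurableSet_Ioo hmono
      _ = ellipticK k := hKrep.symm
  have hKpos : (0:ℝ) < ellipticK k := lt_of_lt_of_le one_pos hK1
  -- (1 - k²) K ≤ E
  have hEK : (1 - k ^ 2) * ellipticK k ≤ ellipticE k := by
    have hmono : ∀ x ∈ Ioo (0:ℝ) 1, (1 - k ^ 2) * fK x ≤ fE x := by
      intro x hx
      obtain ⟨hkx, hx2, -⟩ := basic_bounds hk0 hk1 hx.1 hx.2
      have ha : (0:ℝ) < 1 - x ^ 2 := by nlinarith
      have hb : (0:ℝ) < 1 - k ^ 2 * x ^ 2 := by linarith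
      have hsa : (0:ℝ) < Real.sqrt (1 - x ^ 2) := Real.sqrt_pos.2 ha
      have hsb : (0:ℝ) < Real.sqrt (1 - k ^ 2 * x ^ 2) := Real.sqrt_pos.2 hb
      have hbb : Real.sqrt (1 - k ^ 2 * x ^ 2) * Real.sqrt (1 - k ^ 2 * x ^ 2)
          = 1 - k ^ 2 * x ^ 2 := Real.mul_self_sqrt hb.le
      rw [hfK, hfE]
      calc (1 - k ^ 2) * (1 / Real.sqrt ((1 - x ^ 2) * (1 - k ^ 2 * x ^ 2)))
          ≤ (1 - k ^ 2 * x ^ 2) * (1 / Real.sqrt ((1 - x ^ 2) * (1 - k ^ 2 * x ^ 2))) := by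
            have : (1 - k ^ 2) ≤ 1 - k ^ 2 * x ^ 2 := by
              nlinarith [mul_nonneg (sq_nonneg k) (by nlinarith : (0:ℝ) ≤ 1 - x ^ 2)]
            exact mul_le_mul_of_nonneg_right this (by positivity)
        _ = Real.sqrt (1 - k ^ 2 * x ^ 2) / Real.sqrt (1 - x ^ 2) := by
            rw [Real.sqrt_mul ha.le, ← hbb]
            field_simp
            rw [Real.sqrt_sq hsb.le]
    have h1 : (1 - k ^ 2) * ellipticK k = ∫ x in Ioo (0:ℝ) 1, (1 - k ^ 2) * fK x := by
      rw [hKrep, MeasureTheory.integral_const_mul]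
    rw [h1, hErep]
    exact setIntegral_mono_on (hKint'.const_mul _) hEint' measurableSet_Ioo hmono
  have hEpos : (0:ℝ) < ellipticE k :=
    lt_of_lt_of_le (mul_pos (by nlinarith) hKpos) hEK
  have hKne : ellipticK k ≠ 0 := ne_of_gt hKpos
  have hkne : k ≠ 0 := ne_of_gt hk0
  refine ⟨?_, ?_, ?_⟩
  · rw [Matrix.det_fin_two_of]
    field_simp
    ring
  · rw [Matrix.trace_fin_two_of]
    field_simp
    ring
  · apply div_neg_of_neg_of_pos _ hKpos
    nlinarith
end
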